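/- Fix real parameters α, β with α ≠ 0. Define F : ℝ³ → ℝ³ by F(x,y,z) = (α²y − 2βyz, −αxz + βxy²/α, αxy − 2βxyz/α), and set Ḡ(x,y,z) = −(α/2)(y² + z²) + βy²z/α and G(x,y,z) = x²/2 − αz. Then for every (x,y,z) ∈ ℝ³, F = (∇Ḡ) × (∇G) (cross product), and consequently ∇G·F = 0 and ∇Ḡ·F = 0 identically, i.e. both Hamiltonians G and Ḡ are conserved under the bi-Hamiltonian system ẋ = F obtained from the Lü system. -/

import Mathlib

set_option linter.unusedVariables false

open Matrix

/-- Partial derivative with respect to the first variable. -/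
noncomputable def pd1 (f : ℝ → ℝ → ℝ → ℝ) (x y z : ℝ) : ℝ := deriv (fun t => f t y z) x
/-- Partial derivative with respect to the second variable. -/
noncomputable def pd2 (f : ℝ → ℝ → ℝ → ℝ) (x y z : ℝ) : ℝ := deriv (fun t => f x t z) y
/-- Partial derivative with respect to the third variable. -/
noncomputable def pd3 (f : ℝ → ℝ → ℝ → ℝ) (x y z : ℝ) : ℝ := deriv (fun t => f x y t) z

/-- The bi-Hamiltonian vector field obtained from the Lü system. -/
noncomputable def F (α β : ℝ) (x y z : ℝ) : Fin 3 → ℝ :=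
  ![α ^ 2 * y - 2 * β * y * z,
    -α * x * z + β * x * y ^ 2 / α,
    α * x * y - 2 * β * x * y * z / α]

/-- The Hamiltonian `Ḡ`. -/
noncomputable def Gbar (α β : ℝ) (x y z : ℝ) : ℝ :=
  -(α / 2) * (y ^ 2 + z ^ 2) + β * y ^ 2 * z / α

/-- The Hamiltonian `G`. -/
noncomputable def G (α : ℝ) (x y z : ℝ) : ℝ := x ^ 2 / 2 - α * z

/-- Gradient of `Ḡ`. -/
noncomputable def gradGbar (α β : ℝ) (x y z : ℝ) : Fin 3 → ℝ :=
  ![pd1 (Gbar α β) x y z, pd2 (Gbar α β) x y z, pd3 (Gbar α β) x y z]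

/-- Gradient of `G`. -/
noncomputable def gradG (α : ℝ) (x y z : ℝ) : Fin 3 → ℝ :=
  ![pd1 (G α) x y z, pd2 (G α) x y z, pd3 (G α) x y z]

lemma gradGbar_eq (α β x y z : ℝ) :
    gradGbar α β x y z = ![0, -α * y + 2 * β * y * z / α, -α * z + β * y ^ 2 / α] := by
  have h2 : pd2 (Gbar α β) x y z = -α * y + 2 * β * y * z / α := by
    have h : HasDerivAt (fun t : ℝ => -(α / 2) * (t ^ 2 + z ^ 2) + β * t ^ 2 * z / α)
        (-α * y + 2 * β * y * z / α) y := by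
      have h1 : HasDerivAt (fun t : ℝ => t ^ 2) (2 * y) y := by
        simpa using hasDerivAt_pow 2 y
      have := (((h1.add_const (z ^ 2)).const_mul (-(α/2))).add
        (((h1.const_mul β).mul_const z).div_const α))
      refine this.congr_deriv ?_; ring
    simpa [pd2, Gbar] using h.deriv
  have h3 : pd3 (Gbar α β) x y z = -α * z + β * y ^ 2 / α := by
    have h : HasDerivAt (fun t : ℝ => -(α / 2) * (y ^ 2 + t ^ 2) + β * y ^ 2 * t / α)
        (-α * z + β * y ^ 2 / α) z := by
      have h1 : HasDerivAt (fun t : ℝ => t ^ 2) (2 * z) z := by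
        simpa using hasDerivAt_pow 2 z
      have := (((h1.const_add (y ^ 2)).const_mul (-(α/2))).add
        (((hasDerivAt_id z).const_mul (β * y ^ 2)).div_const α))
      refine this.congr_deriv ?_; ring
    simpa [pd3, Gbar] using h.deriv
  have h1 : pd1 (Gbar α β) x y z = 0 := by simp [pd1, Gbar]
  rw [gradGbar, h1, h2, h3]

lemma gradG_eq (α x y z : ℝ) : gradG α x y z = ![x, 0, -α] := by
  have h1 : pd1 (G α) x y z = x := by
    have hp : HasDerivAt (fun t : ℝ => t ^ 2) (2 * x) x := by simpa using hasDerivAt_pow 2 x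
    have h : HasDerivAt (fun t : ℝ => t ^ 2 / 2 - α * z) x x := by
      have := (hp.div_const 2).sub_const (α * z)
      refine this.congr_deriv ?_; ring
    simpa [pd1, G] using h.deriv
  have h3 : pd3 (G α) x y z = -α := by
    have h : HasDerivAt (fun t : ℝ => x ^ 2 / 2 - α * t) (-α) z := by
      simpa using ((hasDerivAt_id z).const_mul α).const_sub (x ^ 2 / 2)
    simpa [pd3, G] using h.deriv
  have h2 : pd2 (G α) x y z = 0 := by simp [pd2, G]
  rw [gradG, h1, h2, h3]

/-- For `α ≠ 0`: `F = (∇Ḡ) × (∇G)` everywhere, and consequently `∇G·F = 0` and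
`∇Ḡ·F = 0` identically, i.e. both Hamiltonians `G` and `Ḡ` are conserved under the
bi-Hamiltonian system `ẋ = F` obtained from the Lü system. -/
theorem stmt_17 (α β : ℝ) (hα : α ≠ 0) :
    (∀ x y z : ℝ, F α β x y z = crossProduct (gradGbar α β x y z) (gradG α x y z)) ∧
    (∀ x y z : ℝ, gradG α x y z ⬝ᵥ F α β x y z = 0) ∧
    (∀ x y z : ℝ, gradGbar α β x y z ⬝ᵥ F α β x y z = 0) := by
  refine ⟨fun x y z => ?_, fun x y z => ?_, fun x y z => ?_⟩
  · rw [gradGbar_eq, gradG_eq]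
    funext i
    fin_cases i <;>
      simp [F, cross_apply] <;> field_simp <;> ring
  · rw [gradG_eq]
    simp [F, dotProduct, Fin.sum_univ_three]
    field_simp
    ring
  · rw [gradGbar_eq]
    simp [F, dotProduct, Fin.sum_univ_three]
    field_simp
    ring
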